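/- Let p ≥ 5 be a prime and n ≥ 2p an integer. Let G be a finite group having a normal subgroup isomorphic to the alternating group A_n whose centralizer in G is trivial (equivalently, A_n ⊴ G ≤ Aut(A_n)). Then k_{p'}(G) ≥ p. -/

import Mathlib

/-!
Distinct element orders give distinct conjugacy classes, so it suffices to find `p` distinct
orders prime to `p` among the elements of `Aₙ ≤ G`. For odd `p` and `n ≥ 2p` these are
`1, 3, 5, …, 2p - 1` without `p` (cycles of odd length lie in `Aₙ`), together with `2`
(a double transposition).
-/

/-- `k_{p'}(G)`: the number of conjugacy classes of `G` consisting of `p`-regular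
elements (elements of order not divisible by `p`). -/
noncomputable def kpReg (p : ℕ) (G : Type*) [Group G] : ℕ :=
  Nat.card {c : ConjClasses G // ∀ g ∈ c.carrier, ¬ p ∣ orderOf g}

theorem IsConj.orderOf_eq {G : Type*} [Group G] {a b : G} (h : IsConj a b) :
    orderOf a = orderOf b :=
  let ⟨c, hc⟩ := h
  SemiconjBy.orderOf_eq (c : G) hc

theorem card_le_kpReg {G : Type*} [Group G] [Finite G] {p : ℕ} (S : Finset ℕ)
    (hS : ∀ m ∈ S, ¬ p ∣ m ∧ ∃ g : G, orderOf g = m) :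
    S.card ≤ kpReg p G := by
  let classOrder : {c : ConjClasses G // ∀ g ∈ c.carrier, ¬ p ∣ orderOf g} → ℕ :=
    fun c => orderOf c.1.exists_rep.choose
  have hsub : (S : Set ℕ) ⊆ Set.range classOrder := by
    intro m hm
    obtain ⟨hpm, g, rfl⟩ := hS m hm
    have hreg : ∀ x ∈ (ConjClasses.mk g).carrier, ¬ p ∣ orderOf x := fun x hx => by
      rw [ConjClasses.mem_carrier_iff_mk_eq, ConjClasses.mk_eq_mk_iff_isConj] at hx
      rwa [hx.orderOf_eq]
    exact ⟨⟨ConjClasses.mk g, hreg⟩,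
      (ConjClasses.mk_eq_mk_iff_isConj.mp (ConjClasses.exists_rep _).choose_spec).orderOf_eq⟩
  calc S.card = (S : Set ℕ).ncard := (Set.ncard_coe_finset S).symm
    _ ≤ (Set.range classOrder).ncard := Set.ncard_le_ncard hsub (Set.finite_range _)
    _ ≤ kpReg p G := Finite.card_range_le classOrder

section alternatingGroup

variable {α : Type*} [Fintype α] [DecidableEq α]

theorem exists_alternatingGroup_orderOf_eq_lcm (c : Multiset ℕ) (hsum : c.sum ≤ Fintype.card α)
    (hc : ∀ a ∈ c, 2 ≤ a) (heven : Even (c.sum + Multiset.card c)) :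
    ∃ g : alternatingGroup α, orderOf g = c.lcm := by
  obtain ⟨σ, hσ⟩ := (Equiv.Perm.exists_with_cycleType_iff α).mpr ⟨hsum, hc⟩
  have hmem : σ ∈ alternatingGroup α := by
    rw [Equiv.Perm.mem_alternatingGroup, Equiv.Perm.sign_of_cycleType, hσ, heven.neg_one_pow]
  exact ⟨⟨σ, hmem⟩, by rw [Subgroup.orderOf_mk, ← Equiv.Perm.lcm_cycleType, hσ]⟩

theorem exists_alternatingGroup_orderOf_eq_of_odd {m : ℕ} (hm : Odd m)
    (hmα : m ≤ Fintype.card α) : ∃ g : alternatingGroup α, orderOf g = m := by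
  obtain (rfl | hm3) : m = 1 ∨ 3 ≤ m := by
    obtain ⟨k, rfl⟩ := hm
    omega
  · exact ⟨1, orderOf_one⟩
  · simpa using exists_alternatingGroup_orderOf_eq_lcm {m} (by simpa using hmα)
      (by simp; omega) (by simpa using hm.add_one)

theorem exists_alternatingGroup_orderOf_eq_two (hα : 4 ≤ Fintype.card α) :
    ∃ g : alternatingGroup α, orderOf g = 2 := by
  simpa using exists_alternatingGroup_orderOf_eq_lcm {2, 2} (by simpa using hα)
    (by simp) (by decide)

end alternatingGroup

theorem exists_finset_card_eq_not_dvd_of_odd {p : ℕ} (hp : Odd p) (hp3 : 3 ≤ p) :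
    ∃ S : Finset ℕ, S.card = p ∧ ∀ m ∈ S, ¬ p ∣ m ∧ (m = 2 ∨ Odd m ∧ m < 2 * p) := by
  set odds := (Finset.range p).image (fun k => 2 * k + 1)
  have hodds : ∀ m, m ∈ odds ↔ Odd m ∧ m < 2 * p := fun m => by
    simp only [odds, Finset.mem_image, Finset.mem_range]
    constructor
    · rintro ⟨k, hk, rfl⟩; exact ⟨odd_two_mul_add_one k, by omega⟩
    · rintro ⟨⟨k, rfl⟩, hlt⟩; exact ⟨k, by omega, by ring⟩
  have hcard : odds.card = p := by
    rw [Finset.card_image_of_injective _ fun a b h => by simpa using h, Finset.card_range]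
  have h2 : 2 ∉ odds.erase p := by simp [hodds]
  refine ⟨insert 2 (odds.erase p), ?_, ?_⟩
  · rw [Finset.card_insert_of_notMem h2, Finset.card_erase_of_mem ((hodds p).2 ⟨hp, by omega⟩),
      hcard]
    omega
  · intro m hm
    rcases Finset.mem_insert.mp hm with rfl | hm
    · exact ⟨fun h => by have := Nat.le_of_dvd two_pos h; omega, Or.inl rfl⟩
    · obtain ⟨hmp, hm⟩ := Finset.mem_erase.mp hm
      obtain ⟨hodd, hlt⟩ := (hodds m).mp hm
      refine ⟨?_, Or.inr ⟨hodd, hlt⟩⟩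
      rintro ⟨c, rfl⟩
      have hc : c < 2 := Nat.lt_of_mul_lt_mul_left (a := p) (by omega)
      interval_cases c
      · simp at hodd
      · simp at hmp

theorem kpReg_ge_p_of_almost_simple_alternating_general
    (p n : ℕ) (hp : p.Prime) (hp5 : 5 ≤ p) (hn : 2 * p ≤ n)
    (G : Type*) [Group G] [Finite G] (A : Subgroup G)
    (hiso : Nonempty (A ≃* alternatingGroup (Fin n))) :
    p ≤ kpReg p G := by
  obtain ⟨e⟩ := hiso
  let ι : alternatingGroup (Fin n) →* G := A.subtype.comp e.symm.toMonoidHom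
  have hι : Function.Injective ι := A.subtype_injective.comp e.symm.injective
  obtain ⟨S, hcard, hS⟩ :=
    exists_finset_card_eq_not_dvd_of_odd (hp.odd_of_ne_two (by omega)) (by omega)
  refine hcard ▸ card_le_kpReg (p := p) S fun m hm => ⟨(hS m hm).1, ?_⟩
  obtain ⟨g, hg⟩ : ∃ g : alternatingGroup (Fin n), orderOf g = m := by
    rcases (hS m hm).2 with rfl | ⟨hodd, hlt⟩
    · exact exists_alternatingGroup_orderOf_eq_two (by simp; omega)
    · exact exists_alternatingGroup_orderOf_eq_of_odd hodd (by simp; omega)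
  exact ⟨ι g, by rw [orderOf_injective ι hι, hg]⟩

/-- Let `p ≥ 5` be a prime and `n ≥ 2p`.  If `G` is a finite group having a normal
subgroup isomorphic to the alternating group `Aₙ` whose centralizer in `G` is trivial
(equivalently, `Aₙ ⊴ G ≤ Aut(Aₙ)`), then `k_{p'}(G) ≥ p`. -/
theorem kpReg_ge_p_of_almost_simple_alternating
    (p n : ℕ) (hp : p.Prime) (hp5 : 5 ≤ p) (hn : 2 * p ≤ n)
    (G : Type*) [Group G] [Finite G] (A : Subgroup G) (hA : A.Normal)
    (hiso : Nonempty (A ≃* alternatingGroup (Fin n)))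
    (hcent : Subgroup.centralizer (A : Set G) = ⊥) :
    p ≤ kpReg p G :=
  kpReg_ge_p_of_almost_simple_alternating_general p n hp hp5 hn G A hiso
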